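/- arXiv:0708.0061 — 2 statements merged into one kernel-verified Lean document; each statement's English description precedes it below -/
import Mathlib

section
/- Let p₀ and q be probability densities on a σ-finite measure space (Ω, μ), let P₀ be the probability measure with density p₀, and let X₁, …, Xₙ be i.i.d. with law P₀. Then for every b ≥ 0, P₀^n( ∏_{k=1}^n q(X_k) ≥ exp(−n b) · ∏_{k=1}^n p₀(X_k) ) ≤ exp( n b / 2 − n · d_H²(p₀, q) / 2 ). -/
/-! Chernoff's bound at exponent `1/2`: on the event, the likelihood ratio `∏ √(q/p₀)(X_k)` is at
least `exp(-nb/2)` (off the `P₀^n`-null set where some `p₀(X_k) = 0`), so by Markov's inequality and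
independence its probability is at most `exp(nb/2) (E_{P₀} √(q/p₀))^n`. Finally
`E_{P₀} √(q/p₀) = ∫ √(p₀ q) dμ = 1 - d_H²(p₀,q)/2 ≤ exp(-d_H²(p₀,q)/2)`. -/

open MeasureTheory Real

/-- A (probability) density on `(Ω, μ)`: a nonnegative measurable function integrating to 1. -/
def IsDensity {Ω : Type*} [MeasurableSpace Ω] (μ : Measure Ω) (p : Ω → ℝ) : Prop :=
  Measurable p ∧ (∀ x, 0 ≤ p x) ∧ Integrable p μ ∧ ∫ x, p x ∂μ = 1

/-- Squared Hellinger distance `d_H²(p, q) = ∫ (√p − √q)² dμ`. -/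
noncomputable def hellSq {Ω : Type*} [MeasurableSpace Ω] (μ : Measure Ω) (p q : Ω → ℝ) : ℝ :=
  ∫ x, (Real.sqrt (p x) - Real.sqrt (q x)) ^ 2 ∂μ

open ProbabilityTheory
open scoped ENNReal

lemma sqrt_le_prod_sqrt_div {ι : Type*} (s : Finset ι) {c : ℝ} {a b : ι → ℝ}
    (ha : ∀ i ∈ s, 0 < a i) (hb : ∀ i ∈ s, 0 ≤ b i) (h : c * ∏ i ∈ s, a i ≤ ∏ i ∈ s, b i) :
    √c ≤ ∏ i ∈ s, √(b i / a i) := by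
  rw [← sqrt_prod s fun i hi => div_nonneg (hb i hi) (ha i hi).le, Finset.prod_div_distrib]
  exact sqrt_le_sqrt ((le_div_iff₀ (Finset.prod_pos ha)).2 h)

section Hellinger

variable {Ω : Type*} [MeasurableSpace Ω] {μ : Measure Ω} {p q : Ω → ℝ}

lemma integrable_sqrt_mul_sqrt (hp : Integrable p μ) (hq : Integrable q μ)
    (hp₀ : ∀ x, 0 ≤ p x) (hq₀ : ∀ x, 0 ≤ q x) :
    Integrable (fun x => √(p x) * √(q x)) μ := by
  refine ((hp.add hq).div_const 2).mono'
    ((continuous_sqrt.comp_aestronglyMeasurable hp.1).mul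
      (continuous_sqrt.comp_aestronglyMeasurable hq.1)) (.of_forall fun x => ?_)
  rw [Real.norm_of_nonneg (by positivity)]
  show √(p x) * √(q x) ≤ (p x + q x) / 2
  nlinarith [sq_nonneg (√(p x) - √(q x)), sq_sqrt (hp₀ x), sq_sqrt (hq₀ x)]

lemma integral_sqrt_mul_sqrt_eq_one_sub_hellSq (hp : IsDensity μ p) (hq : IsDensity μ q) :
    ∫ x, √(p x) * √(q x) ∂μ = 1 - hellSq μ p q / 2 := by
  obtain ⟨-, hp₀, hpi, hp₁⟩ := hp
  obtain ⟨-, hq₀, hqi, hq₁⟩ := hq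
  have hsq : ∀ x, (√(p x) - √(q x)) ^ 2 = p x + q x - 2 * (√(p x) * √(q x)) := fun x => by
    nlinarith [sq_sqrt (hp₀ x), sq_sqrt (hq₀ x)]
  rw [hellSq, integral_congr_ae (.of_forall hsq),
    integral_sub (f := fun x => p x + q x) (hpi.add hqi)
      ((integrable_sqrt_mul_sqrt hpi hqi hp₀ hq₀).const_mul 2),
    integral_add hpi hqi, integral_const_mul, hp₁, hq₁]
  ring

lemma integral_sqrt_mul_sqrt_le_exp (hp : IsDensity μ p) (hq : IsDensity μ q) :
    ∫ x, √(p x) * √(q x) ∂μ ≤ exp (-(hellSq μ p q / 2)) := by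
  rw [integral_sqrt_mul_sqrt_eq_one_sub_hellSq hp hq]
  linarith [add_one_le_exp (-(hellSq μ p q / 2))]

end Hellinger

section LikelihoodRatio

variable {Ω : Type*} [MeasurableSpace Ω] {μ : Measure Ω} {p q : Ω → ℝ}

lemma ae_pos_withDensity_ofReal (hp : Measurable p) :
    ∀ᵐ x ∂μ.withDensity (fun x => ENNReal.ofReal (p x)), 0 < p x :=
  (ae_withDensity_iff hp.ennreal_ofReal).2 <| .of_forall fun _ h =>
    ENNReal.ofReal_pos.1 (pos_iff_ne_zero.2 h)

lemma lintegral_sqrt_div_withDensity (hp : Measurable p) (hq : Measurable q)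
    (hp₀ : ∀ x, 0 ≤ p x) (hpq : Integrable (fun x => √(p x) * √(q x)) μ) :
    ∫⁻ x, ENNReal.ofReal √(q x / p x) ∂μ.withDensity (fun x => ENNReal.ofReal (p x))
      = ENNReal.ofReal (∫ x, √(p x) * √(q x) ∂μ) := by
  have hmul : ∀ x, p x * √(q x / p x) = √(p x) * √(q x) := fun x => by
    rcases (hp₀ x).eq_or_lt with h | h
    · simp [← h]
    · have := sqrt_pos.2 h
      rw [sqrt_div' _ h.le]
      field_simp
      rw [sq_sqrt (hp₀ x), mul_comm]
  rw [lintegral_withDensity_eq_lintegral_mul _ hp.ennreal_ofReal (by fun_prop),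
    ofReal_integral_eq_lintegral_ofReal hpq (.of_forall fun x => by positivity)]
  refine lintegral_congr fun x => ?_
  simp only [Pi.mul_apply, ← ENNReal.ofReal_mul (hp₀ x), hmul]

end LikelihoodRatio

lemma lintegral_pi_prod_eq_pow {Ω ι : Type*} [MeasurableSpace Ω] [Fintype ι] {ν : Measure Ω}
    [IsProbabilityMeasure ν] {g : Ω → ℝ≥0∞} (hg : Measurable g) :
    ∫⁻ x, ∏ i, g (x i) ∂Measure.pi (fun _ : ι => ν) = (∫⁻ y, g y ∂ν) ^ Fintype.card ι := by
  rw [lintegral_prod_eq_prod_lintegral_of_indepFun _ _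
      (iIndepFun_pi (X := fun _ => g) fun _ => hg.aemeasurable)
      fun i => hg.comp (measurable_pi_apply i)]
  simp_rw [fun i => (measurePreserving_eval (fun _ : ι => ν) i).lintegral_comp hg,
    Finset.prod_const, Finset.card_univ]

lemma measure_pi_le_lintegral_pow_div {Ω ι : Type*} [MeasurableSpace Ω] [Fintype ι]
    {ν : Measure Ω} [IsProbabilityMeasure ν] {g : Ω → ℝ≥0∞} (hg : Measurable g) {ε : ℝ≥0∞}
    (hε : ε ≠ 0) (hε' : ε ≠ ∞) {A : Set (ι → Ω)}
    (hA : A ≤ᵐ[Measure.pi fun _ => ν] {x | ε ≤ ∏ i, g (x i)}) :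
    Measure.pi (fun _ => ν) A ≤ (∫⁻ y, g y ∂ν) ^ Fintype.card ι / ε := by
  rw [← lintegral_pi_prod_eq_pow hg]
  exact (measure_mono_ae hA).trans (meas_ge_le_lintegral_div
    (Finset.measurable_prod _ fun i _ => hg.comp (measurable_pi_apply i)).aemeasurable hε hε')

theorem likelihood_ratio_tail_bound_general {Ω : Type*} [MeasurableSpace Ω]
    (μ : Measure Ω) (p₀ q : Ω → ℝ)
    (hp₀ : IsDensity μ p₀) (hq : IsDensity μ q)
    (P₀ : Measure Ω) [IsProbabilityMeasure P₀]
    (hP₀ : P₀ = μ.withDensity fun x => ENNReal.ofReal (p₀ x))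
    (n : ℕ) (b : ℝ) :
    (Measure.pi fun _ : Fin n => P₀)
        {x : Fin n → Ω |
          Real.exp (-(n : ℝ) * b) * ∏ k : Fin n, p₀ (x k) ≤ ∏ k : Fin n, q (x k)}
      ≤ ENNReal.ofReal (Real.exp ((n : ℝ) * b / 2 - (n : ℝ) * hellSq μ p₀ q / 2)) := by
  obtain ⟨hp₀m, hp₀nn, hp₀i, -⟩ := id hp₀
  obtain ⟨hqm, hqnn, hqi, -⟩ := id hq
  have hpos : ∀ᵐ x ∂Measure.pi (fun _ : Fin n => P₀), ∀ k, 0 < p₀ (x k) :=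
    Measure.ae_pi_le_pi <| Filter.eventually_pi (p := fun _ y => 0 < p₀ y) fun _ =>
      hP₀ ▸ ae_pos_withDensity_ofReal hp₀m
  have hA : {x : Fin n → Ω | exp (-(n : ℝ) * b) * ∏ k, p₀ (x k) ≤ ∏ k, q (x k)}
      ≤ᵐ[Measure.pi fun _ => P₀] {x | ENNReal.ofReal (exp (-(n * b) / 2))
        ≤ ∏ k, ENNReal.ofReal √(q (x k) / p₀ (x k))} := by
    filter_upwards [hpos] with x hx (hxA : _ ≤ _)
    change _ ≤ _
    rw [← ENNReal.ofReal_prod_of_nonneg fun _ _ => sqrt_nonneg _, exp_half, ← neg_mul]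
    exact ENNReal.ofReal_le_ofReal
      (sqrt_le_prod_sqrt_div _ (fun k _ => hx k) (fun k _ => hqnn _) hxA)
  have hg : Measurable fun y => ENNReal.ofReal √(q y / p₀ y) := (hqm.div hp₀m).sqrt.ennreal_ofReal
  have hρ₀ : 0 ≤ ∫ x, √(p₀ x) * √(q x) ∂μ := integral_nonneg fun x => by positivity
  calc _ ≤ (∫⁻ y, ENNReal.ofReal √(q y / p₀ y) ∂P₀) ^ n / ENNReal.ofReal (exp (-(n * b) / 2)) := by
        simpa only [Fintype.card_fin] using measure_pi_le_lintegral_pow_div hg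
          (ENNReal.ofReal_pos.2 (exp_pos _)).ne' ENNReal.ofReal_ne_top hA
    _ = ENNReal.ofReal ((∫ x, √(p₀ x) * √(q x) ∂μ) ^ n / exp (-(n * b) / 2)) := by
        rw [hP₀, lintegral_sqrt_div_withDensity hp₀m hqm hp₀nn
          (integrable_sqrt_mul_sqrt hp₀i hqi hp₀nn hqnn),
          ← ENNReal.ofReal_pow hρ₀, ENNReal.ofReal_div_of_pos (exp_pos _)]
    _ ≤ ENNReal.ofReal (exp (-(hellSq μ p₀ q / 2)) ^ n / exp (-(n * b) / 2)) := by
        gcongr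
        exact integral_sqrt_mul_sqrt_le_exp hp₀ hq
    _ = _ := by rw [← exp_nat_mul, ← exp_sub]; ring_nf

/-- Likelihood ratio tail bound: for every `b ≥ 0`,
`P₀^n( ∏ q(X_k) ≥ exp(−n b) ∏ p₀(X_k) ) ≤ exp( n b/2 − n d_H²(p₀,q)/2 )`. -/
theorem likelihood_ratio_tail_bound {Ω : Type*} [MeasurableSpace Ω]
    (μ : Measure Ω) [SigmaFinite μ] (p₀ q : Ω → ℝ)
    (hp₀ : IsDensity μ p₀) (hq : IsDensity μ q)
    (P₀ : Measure Ω) [IsProbabilityMeasure P₀]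
    (hP₀ : P₀ = μ.withDensity fun x => ENNReal.ofReal (p₀ x))
    (n : ℕ) (hn : 0 < n) (b : ℝ) (hb : 0 ≤ b) :
    (Measure.pi fun _ : Fin n => P₀)
        {x : Fin n → Ω |
          Real.exp (-(n : ℝ) * b) * ∏ k : Fin n, p₀ (x k) ≤ ∏ k : Fin n, q (x k)}
      ≤ ENNReal.ofReal (Real.exp ((n : ℝ) * b / 2 - (n : ℝ) * hellSq μ p₀ q / 2)) :=
  likelihood_ratio_tail_bound_general μ p₀ q hp₀ hq P₀ hP₀ n b
end

section
/- Let p₀ and q₁ be probability densities on a σ-finite measure space (Ω, μ) with q₁ > 0 almost everywhere on {p₀ > 0}, let P₀ be the measure with density p₀, and let X₁, …, Xₙ be i.i.d. with law P₀. Write v₁ = d_H(p₀, q₁) and s = V(p₀, q₁), and assume 0 < s < ∞ and d_K(p₀, q₁) ≤ M v₁² for a constant M > 0. Then for every t > 0, setting d = M v₁² + s t, P₀^n( ∏_{k=1}^n q₁(X_k) ≤ exp(−n d) · ∏_{k=1}^n p₀(X_k) ) ≤ 1 / (n t² s). -/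
/-! On the event, the log-likelihood ratio `S = ∑ₖ log (p₀ / q₁) (Xₖ)` is at least
`n (M v₁² + s t) ≥ n d_K(p₀, q₁) + n s t = 𝔼 S + n s t`. Since `S` is a sum of `n` i.i.d. terms,
`Var S = n Var (log (p₀ / q₁)) ≤ n s`, and Chebyshev's inequality bounds the probability by
`n s / (n s t)² = 1 / (n t² s)`. -/

open MeasureTheory Real

/-- Kullback–Leibler divergence `d_K(p, q) = ∫ p log(p/q) dμ`. -/
noncomputable def klD {Ω : Type*} [MeasurableSpace Ω] (μ : Measure Ω) (p q : Ω → ℝ) : ℝ :=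
  ∫ x, p x * Real.log (p x / q x) ∂μ

/-- Second moment `V(p, q) = ∫ p (log(p/q))² dμ`. -/
noncomputable def klV {Ω : Type*} [MeasurableSpace Ω] (μ : Measure Ω) (p q : Ω → ℝ) : ℝ :=
  ∫ x, p x * (Real.log (p x / q x)) ^ 2 ∂μ

open ProbabilityTheory

section WithDensityOfReal

variable {Ω : Type*} [MeasurableSpace Ω] {μ : Measure Ω} {p : Ω → ℝ}

lemma integral_withDensity_ofReal (hpm : Measurable p) (hp : ∀ x, 0 ≤ p x) (g : Ω → ℝ) :
    ∫ x, g x ∂μ.withDensity (fun x => ENNReal.ofReal (p x)) = ∫ x, p x * g x ∂μ := by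
  rw [integral_withDensity_eq_integral_toReal_smul hpm.ennreal_ofReal
    (ae_of_all _ fun _ => ENNReal.ofReal_lt_top)]
  simp only [ENNReal.toReal_ofReal (hp _), smul_eq_mul]

lemma integrable_withDensity_ofReal_iff (hpm : Measurable p) (hp : ∀ x, 0 ≤ p x) {g : Ω → ℝ} :
    Integrable g (μ.withDensity fun x => ENNReal.ofReal (p x)) ↔
      Integrable (fun x => p x * g x) μ := by
  rw [integrable_withDensity_iff_integrable_smul' hpm.ennreal_ofReal
    (ae_of_all _ fun _ => ENNReal.ofReal_lt_top)]
  simp only [ENNReal.toReal_ofReal (hp _), smul_eq_mul]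

lemma ae_withDensity_ofReal_pos (hpm : Measurable p) :
    ∀ᵐ x ∂μ.withDensity (fun x => ENNReal.ofReal (p x)), 0 < p x := by
  rw [ae_withDensity_iff hpm.ennreal_ofReal]
  exact ae_of_all _ fun _ hx => ENNReal.ofReal_pos.1 (pos_iff_ne_zero.2 hx)

end WithDensityOfReal

lemma measure_pi_sum_ge_le_variance_div_sq {Ω ι : Type*} [MeasurableSpace Ω] [Fintype ι]
    {P : Measure Ω} [IsProbabilityMeasure P] {L : Ω → ℝ} (hL : MemLp L 2 P) {c : ℝ}
    (hc : 0 < c) :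
    Measure.pi (fun _ : ι => P) {x | (Fintype.card ι : ℝ) * P[L] + c ≤ ∑ i, L (x i)}
      ≤ ENNReal.ofReal ((Fintype.card ι : ℝ) * Var[L; P] / c ^ 2) := by
  set Pι := Measure.pi fun _ : ι => P
  set S : (ι → Ω) → ℝ := ∑ i, fun x => L (x i) with hS
  have hS2 : MemLp S 2 Pι :=
    memLp_finsetSum' _ fun i _ => hL.comp_measurePreserving (measurePreserving_eval _ i)
  have hmean : Pι[S] = (Fintype.card ι : ℝ) * P[L] := by
    simp only [hS, Finset.sum_apply]
    rw [integral_finsetSum _ fun i _ => integrable_comp_eval (hL.integrable one_le_two)]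
    simp [integral_comp_eval (μ := fun _ : ι => P) hL.aestronglyMeasurable]
  have hvar : Var[S; Pι] = Fintype.card ι * Var[L; P] := by
    rw [hS, variance_sum_pi (X := fun _ => L) fun _ => hL]
    simp
  calc Pι {x | (Fintype.card ι : ℝ) * P[L] + c ≤ ∑ i, L (x i)}
      ≤ Pι {x | c ≤ |S x - Pι[S]|} := by
        refine measure_mono fun x (hx : (_ : ℝ) ≤ _) => ?_
        change c ≤ |S x - Pι[S]|
        rw [hmean, hS, Finset.sum_apply]
        exact le_abs.2 (Or.inl (by linarith))
    _ ≤ ENNReal.ofReal (Var[S; Pι] / c ^ 2) := meas_ge_le_variance_div_sq hS2 hc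
    _ = ENNReal.ofReal ((Fintype.card ι : ℝ) * Var[L; P] / c ^ 2) := by rw [hvar]

lemma le_sum_log_div_of_prod_le_exp_mul_prod {ι : Type*} [Fintype ι] {p q : ι → ℝ}
    (hp : ∀ i, 0 < p i) (hq : ∀ i, 0 < q i) {a : ℝ}
    (h : ∏ i, q i ≤ exp (-a) * ∏ i, p i) : a ≤ ∑ i, log (p i / q i) := by
  have hlog := log_le_log (Finset.prod_pos fun i _ => hq i) h
  rw [log_mul (exp_ne_zero _) (Finset.prod_pos fun i _ => hp i).ne', log_exp,
    log_prod fun i _ => (hq i).ne', log_prod fun i _ => (hp i).ne'] at hlog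
  simp only [log_div (hp _).ne' (hq _).ne', Finset.sum_sub_distrib]
  linarith

lemma ae_pi_le_sum_log_div_of_prod_le_exp_mul_prod {Ω ι : Type*} [MeasurableSpace Ω]
    [Fintype ι] {P : Measure Ω} [SigmaFinite P] {p q : Ω → ℝ}
    (hpos : ∀ᵐ x ∂P, 0 < p x ∧ 0 < q x) (a : ℝ) :
    {x : ι → Ω | ∏ i, q (x i) ≤ exp (-a) * ∏ i, p (x i)}
      ≤ᵐ[Measure.pi fun _ => P] {x | a ≤ ∑ i, log (p (x i) / q (x i))} := by
  filter_upwards [ae_all_iff.2 fun _ : ι => Measure.tendsto_eval_ae_ae.eventually hpos] with x hx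
  exact le_sum_log_div_of_prod_le_exp_mul_prod (fun i => (hx i).1) (fun i => (hx i).2)

theorem good_density_lower_tail_bound_general {Ω : Type*} [MeasurableSpace Ω]
    (μ : Measure Ω) (p₀ q₁ : Ω → ℝ)
    (hp₀ : IsDensity μ p₀) (hq₁ : IsDensity μ q₁)
    (hq₁pos : ∀ᵐ x ∂μ, 0 < p₀ x → 0 < q₁ x)
    (hVint : Integrable (fun x => p₀ x * (Real.log (p₀ x / q₁ x)) ^ 2) μ)
    (hVpos : 0 < klV μ p₀ q₁)
    (M : ℝ)
    (hdK : klD μ p₀ q₁ ≤ M * hellSq μ p₀ q₁)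
    (P₀ : Measure Ω) [IsProbabilityMeasure P₀]
    (hP₀ : P₀ = μ.withDensity fun x => ENNReal.ofReal (p₀ x))
    (n : ℕ) (hn : 0 < n) (t : ℝ) (ht : 0 < t) :
    (Measure.pi fun _ : Fin n => P₀)
        {x : Fin n → Ω |
          ∏ k : Fin n, q₁ (x k) ≤
            Real.exp (-(n : ℝ) * (M * hellSq μ p₀ q₁ + klV μ p₀ q₁ * t)) *
              ∏ k : Fin n, p₀ (x k)}
      ≤ ENNReal.ofReal (1 / ((n : ℝ) * t ^ 2 * klV μ p₀ q₁)) := by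
  obtain ⟨hp₀m, hp₀nn, -, -⟩ := hp₀
  set s := klV μ p₀ q₁
  set L : Ω → ℝ := fun x => log (p₀ x / q₁ x)
  have hLm : Measurable L := (hp₀m.div hq₁.1).log
  have hL2 : MemLp L 2 P₀ := by
    rw [hP₀, memLp_two_iff_integrable_sq hLm.aestronglyMeasurable]
    exact (integrable_withDensity_ofReal_iff hp₀m hp₀nn).2 hVint
  have hmean : P₀[L] = klD μ p₀ q₁ := by rw [hP₀, integral_withDensity_ofReal hp₀m hp₀nn]; rfl
  have hvar : Var[L; P₀] ≤ s := by
    refine (variance_le_expectation_sq hLm.aestronglyMeasurable).trans_eq ?_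
    rw [hP₀, integral_withDensity_ofReal hp₀m hp₀nn]; rfl
  have hpos : ∀ᵐ x ∂P₀, 0 < p₀ x ∧ 0 < q₁ x := by
    rw [hP₀]
    filter_upwards [ae_withDensity_ofReal_pos hp₀m,
      (withDensity_absolutelyContinuous μ _).ae_le hq₁pos] with x hp hq using ⟨hp, hq hp⟩
  have hthreshold : n * P₀[L] + n * s * t ≤ n * (M * hellSq μ p₀ q₁ + s * t) := by
    rw [hmean]; nlinarith [mul_le_mul_of_nonneg_left hdK n.cast_nonneg]
  simp_rw [neg_mul]
  calc _ ≤ Measure.pi (fun _ => P₀) {x | n * P₀[L] + n * s * t ≤ ∑ k, L (x k)} :=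
        (measure_mono_ae (ae_pi_le_sum_log_div_of_prod_le_exp_mul_prod hpos _)).trans
          (measure_mono fun x (hx : (_ : ℝ) ≤ _) => hthreshold.trans hx)
    _ ≤ ENNReal.ofReal (n * Var[L; P₀] / (n * s * t) ^ 2) := by
        simpa only [Fintype.card_fin] using
          measure_pi_sum_ge_le_variance_div_sq hL2 (ι := Fin n) (c := n * s * t) (by positivity)
    _ ≤ ENNReal.ofReal (1 / (n * t ^ 2 * s)) := by
        refine ENNReal.ofReal_le_ofReal ?_
        calc _ ≤ n * s / (n * s * t) ^ 2 := by gcongr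
          _ = 1 / (n * t ^ 2 * s) := by field_simp

/-- Lower tail bound for the likelihood of the good density: with `v₁² = d_H²(p₀,q₁)`,
`s = V(p₀,q₁) ∈ (0,∞)` and `d_K(p₀,q₁) ≤ M v₁²`, for every `t > 0`, setting
`d = M v₁² + s t`, `P₀^n( ∏ q₁(X_k) ≤ exp(−n d) ∏ p₀(X_k) ) ≤ 1/(n t² s)`. -/
theorem good_density_lower_tail_bound {Ω : Type*} [MeasurableSpace Ω]
    (μ : Measure Ω) [SigmaFinite μ] (p₀ q₁ : Ω → ℝ)
    (hp₀ : IsDensity μ p₀) (hq₁ : IsDensity μ q₁)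
    (hq₁pos : ∀ᵐ x ∂μ, 0 < p₀ x → 0 < q₁ x)
    (hVint : Integrable (fun x => p₀ x * (Real.log (p₀ x / q₁ x)) ^ 2) μ)
    (hVpos : 0 < klV μ p₀ q₁)
    (M : ℝ) (hM : 0 < M)
    (hdK : klD μ p₀ q₁ ≤ M * hellSq μ p₀ q₁)
    (P₀ : Measure Ω) [IsProbabilityMeasure P₀]
    (hP₀ : P₀ = μ.withDensity fun x => ENNReal.ofReal (p₀ x))
    (n : ℕ) (hn : 0 < n) (t : ℝ) (ht : 0 < t) :
    (Measure.pi fun _ : Fin n => P₀)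
        {x : Fin n → Ω |
          ∏ k : Fin n, q₁ (x k) ≤
            Real.exp (-(n : ℝ) * (M * hellSq μ p₀ q₁ + klV μ p₀ q₁ * t)) *
              ∏ k : Fin n, p₀ (x k)}
      ≤ ENNReal.ofReal (1 / ((n : ℝ) * t ^ 2 * klV μ p₀ q₁)) :=
  good_density_lower_tail_bound_general μ p₀ q₁ hp₀ hq₁ hq₁pos hVint hVpos M hdK P₀ hP₀ n hn t ht
end
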